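/- In stage i > 1 of the reward design scheme, under the designed reward function H_i(s), the unique better response step in configuration s ∈ T_i \ {s_i} is that miner p_{m_i(s)} moves from s_f.p_{i−1} to s_f.p_i. -/

import Mathlib

open Finset Function

/-- Total mining power invested in coin `c` in configuration `s`. -/
noncomputable def totalPower {ι C : Type*} [Fintype ι] [DecidableEq C]
    (m : ι → ℝ) (s : ι → C) (c : C) : ℝ :=
  ∑ p, if s p = c then m p else 0

/-- Revenue per unit of coin `c` in configuration `s`. -/
noncomputable def RPU {ι C : Type*} [Fintype ι] [DecidableEq C]
    (m : ι → ℝ) (F : C → ℝ) (s : ι → C) (c : C) : ℝ :=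
  F c / totalPower m s c

/-- Payoff of miner `p` in configuration `s`. -/
noncomputable def payoff {ι C : Type*} [Fintype ι] [DecidableEq C]
    (m : ι → ℝ) (F : C → ℝ) (s : ι → C) (p : ι) : ℝ :=
  m p * F (s p) / totalPower m s (s p)

/-- A better response step of miner `p` moving to coin `c`. -/
def betterStep {ι C : Type*} [Fintype ι] [DecidableEq ι] [DecidableEq C]
    (m : ι → ℝ) (F : C → ℝ) (s : ι → C) (p : ι) (c : C) : Prop :=
  payoff m F s p < payoff m F (Function.update s p c) p

/-- Miner `p` is stable in `s`: it has no better response step. -/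
def minerStable {ι C : Type*} [Fintype ι] [DecidableEq ι] [DecidableEq C]
    (m : ι → ℝ) (F : C → ℝ) (s : ι → C) (p : ι) : Prop :=
  ∀ c, ¬ betterStep m F s p c

/-- A configuration is stable (a pure equilibrium) if no miner has a better response step. -/
def stableConfig {ι C : Type*} [Fintype ι] [DecidableEq ι] [DecidableEq C]
    (m : ι → ℝ) (F : C → ℝ) (s : ι → C) : Prop :=
  ∀ p c, ¬ betterStep m F s p c

/-- `R(s) = max_c RPU_c(s)`. -/
noncomputable def maxRPU {ι C : Type*} [Fintype ι] [Fintype C] [DecidableEq C] [Nonempty C]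
    (m : ι → ℝ) (F : C → ℝ) (s : ι → C) : ℝ :=
  Finset.univ.sup' Finset.univ_nonempty (RPU m F s)

/-- The designed reward function of stage `i` at configuration `s`: the target coin
`ctar = s_f.p_i` gets reward `R(s)·(M_{ctar}(s) + w)` where `w` is the anchor's power,
every other coin `c` gets `R(s)·M_c(s)`. -/
noncomputable def designedReward {ι C : Type*} [Fintype ι] [Fintype C] [DecidableEq C]
    [Nonempty C] (m : ι → ℝ) (F : C → ℝ) (s : ι → C) (ctar : C) (w : ℝ) : C → ℝ :=
  fun c => if c = ctar then maxRPU m F s * (totalPower m s ctar + w)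
           else maxRPU m F s * totalPower m s c

/-! The reward `R(s)·M_c` gives every coin other than the target the same revenue per unit `R(s)`,
so a miner earns at least `m_p R(s)` where it stands and strictly less after joining any other
non-target coin. Joining the target `t` pays `m_p R(s) (M_t + w) / (M_t + m_p)`, which beats
`m_p R(s)` exactly when `m_p < w`. With `w = m_a` and powers strictly decreasing, the miners
weaker than `p_a` are those after `a`, and of these only `p_j` is off the target. -/

section Power

variable {ι C : Type*} [Fintype ι] [DecidableEq C] {m : ι → ℝ}

lemma totalPower_nonneg (hm : ∀ p, 0 < m p) (s : ι → C) (c : C) : 0 ≤ totalPower m s c :=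
  sum_nonneg fun p _ => by split_ifs; exacts [(hm p).le, le_rfl]

lemma le_totalPower_self (hm : ∀ p, 0 < m p) (s : ι → C) (p : ι) :
    m p ≤ totalPower m s (s p) := by
  simpa [totalPower] using single_le_sum (f := fun q => if s q = s p then m q else 0)
    (fun q _ => by split_ifs; exacts [(hm q).le, le_rfl]) (mem_univ p)

lemma totalPower_update_self [DecidableEq ι] (m : ι → ℝ) {s : ι → C} {p : ι} {c : C}
    (hp : s p ≠ c) :
    totalPower m (update s p c) c = totalPower m s c + m p := by
  unfold totalPower
  rw [← add_sum_erase _ _ (mem_univ p),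
    ← add_sum_erase _ (fun q => if s q = c then m q else 0) (mem_univ p),
    sum_congr rfl fun q hq => by rw [update_of_ne (ne_of_mem_erase hq)]]
  simp [hp, add_comm]

lemma payoff_update_self [DecidableEq ι] (m : ι → ℝ) (G : C → ℝ) {s : ι → C} {p : ι}
    {c : C} (hp : s p ≠ c) :
    payoff m G (update s p c) p = m p * G c / (totalPower m s c + m p) := by
  simp only [payoff, update_self, totalPower_update_self m hp]

end Power

section DesignedReward

variable {ι C : Type*} [Fintype ι] [Fintype C] [DecidableEq C] [Nonempty C]
  {m : ι → ℝ} {F : C → ℝ}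

lemma maxRPU_pos [Nonempty ι] (hm : ∀ p, 0 < m p) (hF : ∀ c, 0 < F c) (s : ι → C) :
    0 < maxRPU m F s := by
  obtain ⟨p⟩ := ‹Nonempty ι›
  have hRPU : 0 < RPU m F s (s p) :=
    div_pos (hF _) ((hm p).trans_le (le_totalPower_self hm s p))
  exact hRPU.trans_le (le_sup' (RPU m F s) (mem_univ (s p)))

lemma payoff_designedReward_of_ne (hm : ∀ p, 0 < m p) (s : ι → C) {t : C} (w : ℝ) {p : ι}
    (hp : s p ≠ t) : payoff m (designedReward m F s t w) s p = m p * maxRPU m F s := by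
  have hM : 0 < totalPower m s (s p) := (hm p).trans_le (le_totalPower_self hm s p)
  simp only [payoff, designedReward, if_neg hp]
  field_simp

lemma mul_maxRPU_le_payoff_designedReward (hm : ∀ p, 0 < m p) (hF : ∀ c, 0 < F c)
    (s : ι → C) (t : C) {w : ℝ} (hw : 0 ≤ w) (p : ι) :
    m p * maxRPU m F s ≤ payoff m (designedReward m F s t w) s p := by
  by_cases hp : s p = t
  · have hM : 0 < totalPower m s t := hp ▸ (hm p).trans_le (le_totalPower_self hm s p)
    have : Nonempty ι := ⟨p⟩
    have hR := maxRPU_pos hm hF s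
    simp only [payoff, designedReward, hp, if_true]
    rw [le_div_iff₀ hM]
    nlinarith [mul_pos (hm p) hR]
  · exact (payoff_designedReward_of_ne hm s w hp).ge

lemma payoff_update_designedReward_lt [DecidableEq ι] (hm : ∀ p, 0 < m p)
    (hF : ∀ c, 0 < F c) (s : ι → C) {t c : C} (w : ℝ) {p : ι} (hct : c ≠ t)
    (hpc : s p ≠ c) :
    payoff m (designedReward m F s t w) (update s p c) p < m p * maxRPU m F s := by
  have : Nonempty ι := ⟨p⟩
  have hpR := mul_pos (hm p) (maxRPU_pos hm hF s)
  have hMc := totalPower_nonneg hm s c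
  rw [payoff_update_self m _ hpc]
  simp only [designedReward, if_neg hct]
  rw [div_lt_iff₀ (by linarith [hm p])]
  nlinarith [mul_pos hpR (hm p)]

lemma mul_maxRPU_lt_payoff_update_designedReward_iff [DecidableEq ι] (hm : ∀ p, 0 < m p)
    (hF : ∀ c, 0 < F c) (s : ι → C) {t : C} (w : ℝ) {p : ι} (hpt : s p ≠ t) :
    m p * maxRPU m F s < payoff m (designedReward m F s t w) (update s p t) p ↔ m p < w := by
  have : Nonempty ι := ⟨p⟩
  have hpR := mul_pos (hm p) (maxRPU_pos hm hF s)
  have hMt := totalPower_nonneg hm s t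
  rw [payoff_update_self m _ hpt]
  simp only [designedReward, if_true]
  rw [lt_div_iff₀ (by linarith [hm p])]
  constructor <;> intro h <;> nlinarith

theorem betterStep_designedReward_iff [DecidableEq ι] (hm : ∀ p, 0 < m p)
    (hF : ∀ c, 0 < F c) (s : ι → C) (t : C) {w : ℝ} (hw : 0 ≤ w) (p : ι) (c : C) :
    betterStep m (designedReward m F s t w) s p c ↔ s p ≠ t ∧ c = t ∧ m p < w := by
  unfold betterStep
  constructor
  · intro h
    have hpc : s p ≠ c := by
      rintro rfl
      simp only [update_eq_self, lt_self_iff_false] at h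
    by_cases hct : c = t
    · subst hct
      rw [payoff_designedReward_of_ne hm s w hpc,
        mul_maxRPU_lt_payoff_update_designedReward_iff hm hF s w hpc] at h
      exact ⟨hpc, rfl, h⟩
    · have hcur := mul_maxRPU_le_payoff_designedReward hm hF s t hw p
      exact absurd (hcur.trans_lt h) (payoff_update_designedReward_lt hm hF s w hct hpc).not_gt
  · rintro ⟨hpt, rfl, hpw⟩
    rw [payoff_designedReward_of_ne hm s w hpt]
    exact (mul_maxRPU_lt_payoff_update_designedReward_iff hm hF s w hpt).mpr hpw

end DesignedReward

theorem stage_unique_better_response_general {C : Type*} [Fintype C] [DecidableEq C] [Nonempty C]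
    {n : ℕ} (m : Fin n → ℝ) (F : C → ℝ) (s_f : Fin n → C)
    (hm : ∀ p, 0 < m p) (hF : ∀ c, 0 < F c)
    (hdec : ∀ k l : Fin n, k < l → m l < m k)
    (iprev icur : Fin n)
    (hcoins : s_f iprev ≠ s_f icur)
    (s : Fin n → C)
    (j a : Fin n) (hj₁ : s j = s_f iprev)
    (hj₂ : ∀ l, j < l → s l = s_f icur) (ha : (a : ℕ) + 1 = (j : ℕ)) :
    betterStep m (designedReward m F s (s_f icur) (m a)) s j (s_f icur) ∧
      ∀ (p : Fin n) (c : C),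
        betterStep m (designedReward m F s (s_f icur) (m a)) s p c →
          p = j ∧ c = s_f icur := by
  have hanti : StrictAnti m := fun k l hkl => hdec k l hkl
  have hstep := betterStep_designedReward_iff hm hF s (s_f icur) (hm a).le
  refine ⟨(hstep j _).mpr ⟨hj₁ ▸ hcoins, rfl, hanti (Fin.lt_def.mpr (by omega))⟩,
    fun p c h => ?_⟩
  obtain ⟨hpt, rfl, hpa⟩ := (hstep p c).mp h
  have hap : (a : ℕ) < p := Fin.lt_def.mp (hanti.lt_iff_gt.mp hpa)
  rcases (Fin.le_def.mpr (by omega : (j : ℕ) ≤ p)).lt_or_eq with hjp | rfl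
  · exact absurd (hj₂ p hjp) hpt
  · exact ⟨rfl, rfl⟩

/-- in stage `i > 1` of the reward design scheme (here `iprev = p_{i-1}`,
`icur = p_i`, mover `j = m_i(s)`, anchor `a = a_i(s) = m_i(s) − 1`), under the designed
rewards `H_i(s)`, the unique better response step at `s ∈ T_i \ {s_i}` is that miner `j`
moves from `s_f.p_{i-1}` to `s_f.p_i`. -/
theorem stage_unique_better_response {C : Type*} [Fintype C] [DecidableEq C] [Nonempty C]
    {n : ℕ} (m : Fin n → ℝ) (F : C → ℝ) (s_f : Fin n → C)
    (hm : ∀ p, 0 < m p) (hF : ∀ c, 0 < F c)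
    (hdec : ∀ k l : Fin n, k < l → m l < m k)
    (hsf : stableConfig m F s_f)
    (iprev icur : Fin n) (hstage : (iprev : ℕ) + 1 = (icur : ℕ))
    (hcoins : s_f iprev ≠ s_f icur)
    (s : Fin n → C)
    (hT₁ : ∀ k, k < icur → s k = s_f k)
    (hT₂ : ∀ k, icur ≤ k → s k = s_f icur ∨ s k = s_f iprev)
    (j a : Fin n) (hj₀ : icur ≤ j) (hj₁ : s j = s_f iprev)
    (hj₂ : ∀ l, j < l → s l = s_f icur) (ha : (a : ℕ) + 1 = (j : ℕ)) :
    betterStep m (designedReward m F s (s_f icur) (m a)) s j (s_f icur) ∧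
      ∀ (p : Fin n) (c : C),
        betterStep m (designedReward m F s (s_f icur) (m a)) s p c →
          p = j ∧ c = s_f icur :=
  stage_unique_better_response_general m F s_f hm hF hdec iprev icur hcoins s j a hj₁ hj₂ ha
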